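/- arXiv:2410.07432 — 5 statements merged into one kernel-verified Lean document; each statement's English description precedes it below -/
import Mathlib

section
/- Let F be a 3-SAT formula over p variables with clauses C_1, …, C_c, let A be a partial assignment, and let D = {l ∈ L : F ∧ A ⊨₁ l} be the set of literals deducible from F and A by unit propagation. Then, with max and min applied entrywise, E(D) = max( min( Σ_{i=1}^c 1{E(C_i) · E_notfalse(A) = 1} · E(C_i), 1 ) − E_assigned(A), 0 ), where 1{·} is the indicator of the stated condition, 1 denotes the all-ones vector of ℝ^{2p}, and 0 the zero vector. -/
open Finset

abbrev Lit (p : ℕ) := Fin p × Bool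

def negLit {p : ℕ} (l : Lit p) : Lit p := (l.1, !l.2)

def Consistent {p : ℕ} (B : Finset (Lit p)) : Prop := ∀ l ∈ B, negLit l ∉ B

/-- The encoding `E(B) ∈ ℝ^{2p}`. -/
def enc {p : ℕ} (B : Finset (Lit p)) : Fin p ⊕ Fin p → ℝ
  | Sum.inl v => if (v, true) ∈ B then 1 else 0
  | Sum.inr v => if (v, false) ∈ B then 1 else 0

/-- The not-false encoding `E_notfalse(B) ∈ ℝ^{2p}`. -/
def encNotFalse {p : ℕ} (B : Finset (Lit p)) : Fin p ⊕ Fin p → ℝ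
  | Sum.inl v => if (v, false) ∉ B then 1 else 0
  | Sum.inr v => if (v, true) ∉ B then 1 else 0

/-- The assigned encoding `E_assigned(B) ∈ ℝ^{2p}`. -/
def encAssigned {p : ℕ} (B : Finset (Lit p)) : Fin p ⊕ Fin p → ℝ
  | Sum.inl v => if (v, true) ∈ B ∨ (v, false) ∈ B then 1 else 0
  | Sum.inr v => if (v, true) ∈ B ∨ (v, false) ∈ B then 1 else 0

def dotp {p : ℕ} (u w : Fin p ⊕ Fin p → ℝ) : ℝ := ∑ i, u i * w i

/-- A literal `l` is deducible from `F = ⋀ᵢ Cᵢ` and `A` by unit propagation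
(`F ∧ A ⊨₁ l`). -/
def UnitDeducible {p c : ℕ} (C : Fin c → Finset (Lit p)) (A : Finset (Lit p))
    (l : Lit p) : Prop :=
  l ∉ A ∧ negLit l ∉ A ∧ ∃ i, l ∈ C i ∧ ∀ l' ∈ C i, l' ≠ l → negLit l' ∈ A

open Classical in
/-- `D = {l ∈ L : F ∧ A ⊨₁ l}` as a finite set. -/
noncomputable def deducedSet {p c : ℕ} (C : Fin c → Finset (Lit p))
    (A : Finset (Lit p)) : Finset (Lit p) :=
  Finset.univ.filter (fun l => UnitDeducible C A l)

def litOf {p : ℕ} : Fin p ⊕ Fin p → Lit p :=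
  Sum.elim (fun v => (v, true)) (fun v => (v, false))

def litEquiv (p : ℕ) : (Fin p ⊕ Fin p) ≃ Lit p where
  toFun := litOf
  invFun l := if l.2 then Sum.inl l.1 else Sum.inr l.1
  left_inv j := by cases j <;> rfl
  right_inv l := by rcases l with ⟨v, b⟩; cases b <;> rfl

lemma enc_eq {p : ℕ} (B : Finset (Lit p)) (j : Fin p ⊕ Fin p) :
    enc B j = if litOf j ∈ B then 1 else 0 := by cases j <;> rfl

lemma encNotFalse_eq {p : ℕ} (B : Finset (Lit p)) (j : Fin p ⊕ Fin p) :
    encNotFalse B j = if negLit (litOf j) ∉ B then 1 else 0 := by cases j <;> rfl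

lemma encAssigned_eq {p : ℕ} (B : Finset (Lit p)) (j : Fin p ⊕ Fin p) :
    encAssigned B j = if litOf j ∈ B ∨ negLit (litOf j) ∈ B then 1 else 0 := by
  cases j with
  | inl v => rfl
  | inr v =>
    simp only [encAssigned, litOf, negLit, Sum.elim_inr, Bool.not_false]
    exact if_congr or_comm rfl rfl

open Classical in
lemma dotp_enc {p : ℕ} (B A : Finset (Lit p)) :
    dotp (enc B) (encNotFalse A) = ((B.filter (fun l => negLit l ∉ A)).card : ℝ) := by
  unfold dotp
  have h : ∀ j : Fin p ⊕ Fin p, enc B j * encNotFalse A j =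
      (fun l : Lit p => if l ∈ B ∧ negLit l ∉ A then (1 : ℝ) else 0) (litEquiv p j) := by
    intro j
    rw [enc_eq, encNotFalse_eq]
    show _ = if litOf j ∈ B ∧ negLit (litOf j) ∉ A then (1:ℝ) else 0
    split_ifs with h1 h2 <;> simp_all
  rw [Finset.sum_congr rfl (fun j _ => h j),
    Equiv.sum_comp (litEquiv p) (fun l : Lit p => if l ∈ B ∧ negLit l ∉ A then (1 : ℝ) else 0),
    Finset.sum_boole]
  congr 1
  congr 1
  ext l
  simp

open Classical in
theorem stmt2 (p c : ℕ) (hp : 1 ≤ p) (hc : 1 ≤ c)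
    (C : Fin c → Finset (Lit p)) (hC : ∀ i, Consistent (C i))
    (hC3 : ∀ i, (C i).card ≤ 3)
    (A : Finset (Lit p)) (hA : Consistent A) :
    enc (deducedSet C A) = fun j =>
      max
        (min (∑ i : Fin c,
            (if dotp (enc (C i)) (encNotFalse A) = 1 then (1 : ℝ) else 0) * enc (C i) j)
          1
        - encAssigned A j)
        0 := by
  classical
  funext j
  set l := litOf j with hl
  by_cases hd : UnitDeducible C A l
  · have hL : enc (deducedSet C A) j = 1 := by
      rw [enc_eq]; simp [deducedSet, ← hl, hd]
    obtain ⟨hlA, hnlA, i0, hi0, hall⟩ := hd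
    have hfilt : (C i0).filter (fun l' => negLit l' ∉ A) = {l} := by
      ext l'
      simp only [mem_filter, mem_singleton]
      constructor
      · rintro ⟨h1, h2⟩
        by_contra hne
        exact h2 (hall l' h1 hne)
      · rintro rfl; exact ⟨hi0, hnlA⟩
    have hdot : dotp (enc (C i0)) (encNotFalse A) = 1 := by
      rw [dotp_enc, hfilt]; simp
    have hterm : ∀ i : Fin c, i ∈ (univ : Finset (Fin c)) → 0 ≤
        (if dotp (enc (C i)) (encNotFalse A) = 1 then (1:ℝ) else 0) * enc (C i) j := by
      intro i _
      apply mul_nonneg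
      · split_ifs <;> norm_num
      · rw [enc_eq]; split_ifs <;> norm_num
    have hS : (1:ℝ) ≤ ∑ i : Fin c,
        (if dotp (enc (C i)) (encNotFalse A) = 1 then (1:ℝ) else 0) * enc (C i) j := by
      have h0 : (if dotp (enc (C i0)) (encNotFalse A) = 1 then (1:ℝ) else 0) * enc (C i0) j = 1 := by
        rw [if_pos hdot, enc_eq, if_pos hi0]; ring
      calc (1:ℝ) = _ := h0.symm
        _ ≤ _ := Finset.single_le_sum hterm (mem_univ i0)
    have hAs : encAssigned A j = 0 := by
      rw [encAssigned_eq]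
      simp [← hl, hlA, hnlA]
    rw [hL, hAs, min_eq_right hS]
    norm_num
  · have hL : enc (deducedSet C A) j = 0 := by
      rw [enc_eq]; simp [deducedSet, ← hl, hd]
    rw [hL]
    by_cases hass : l ∈ A ∨ negLit l ∈ A
    · have hAs : encAssigned A j = 1 := by
        rw [encAssigned_eq, if_pos]; rwa [← hl]
      rw [hAs, eq_comm, max_eq_right]
      have := min_le_right (∑ i : Fin c,
        (if dotp (enc (C i)) (encNotFalse A) = 1 then (1:ℝ) else 0) * enc (C i) j) 1
      linarith
    · push_neg at hass
      obtain ⟨hlA, hnlA⟩ := hass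
      have hAs : encAssigned A j = 0 := by
        rw [encAssigned_eq]
        simp [← hl, hlA, hnlA]
      have hS : ∀ i : Fin c,
          (if dotp (enc (C i)) (encNotFalse A) = 1 then (1:ℝ) else 0) * enc (C i) j = 0 := by
        intro i
        by_cases hdot : dotp (enc (C i)) (encNotFalse A) = 1
        · rw [if_pos hdot, enc_eq, ← hl]
          suffices h : l ∉ C i by simp [h]
          intro hli
          rw [dotp_enc] at hdot
          have hcard : ((C i).filter (fun l' => negLit l' ∉ A)).card = 1 := by
            exact_mod_cast hdot
          obtain ⟨a, ha⟩ := Finset.card_eq_one.mp hcard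
          have hlmem : l ∈ (C i).filter (fun l' => negLit l' ∉ A) :=
            mem_filter.mpr ⟨hli, hnlA⟩
          rw [ha, mem_singleton] at hlmem
          subst hlmem
          refine hd ⟨hlA, hnlA, i, hli, fun l' hl' hne => ?_⟩
          by_contra hneg
          have : l' ∈ (C i).filter (fun l'' => negLit l'' ∉ A) :=
            mem_filter.mpr ⟨hl', hneg⟩
          rw [ha, mem_singleton] at this
          exact hne this
        · rw [if_neg hdot]; ring
      rw [Finset.sum_congr rfl (fun i _ => hS i), hAs]
      norm_num
end

section
/- Let F be a 3-SAT formula over p variables with clauses C_1, …, C_c, let A be a partial assignment, let D = {l ∈ L : F ∧ A ⊨₁ l}, and set z := Σ_{i=1}^c 1{E(C_i) · E_notfalse(A) = 1} · E(C_i) ∈ ℝ^{2p}. Then for every real constant m > 1, E(D) = ReLU(m·z − E_assigned(A)) − ReLU(m·z − 1), where ReLU(t) = max(t, 0) is applied entrywise and 1 denotes the all-ones vector of ℝ^{2p}. -/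
open Finset

def toLit (p : ℕ) : (Fin p ⊕ Fin p) ≃ Lit p where
  toFun j := match j with
    | Sum.inl v => (v, true)
    | Sum.inr v => (v, false)
  invFun l := if l.2 then Sum.inl l.1 else Sum.inr l.1
  left_inv := by rintro (v | v) <;> simp
  right_inv := by rintro ⟨v, (_ | _)⟩ <;> simp

lemma enc_apply {p : ℕ} (B : Finset (Lit p)) (j : Fin p ⊕ Fin p) :
    enc B j = if (toLit p) j ∈ B then 1 else 0 := by
  cases j <;> rfl

lemma encNotFalse_apply {p : ℕ} (A : Finset (Lit p)) (j : Fin p ⊕ Fin p) :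
    encNotFalse A j = if negLit ((toLit p) j) ∉ A then 1 else 0 := by
  cases j <;> rfl

lemma encAssigned_apply {p : ℕ} (A : Finset (Lit p)) (j : Fin p ⊕ Fin p) :
    encAssigned A j = if (toLit p) j ∈ A ∨ negLit ((toLit p) j) ∈ A then 1 else 0 := by
  cases j with
  | inl v => rfl
  | inr v => simp [encAssigned, toLit, negLit, or_comm]

open Classical in
lemma dot_eq {p : ℕ} (B A : Finset (Lit p)) :
    dotp (enc B) (encNotFalse A) = ((B.filter fun l => negLit l ∉ A).card : ℝ) := by
  classical
  have h1 : dotp (enc B) (encNotFalse A)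
      = ∑ j : Fin p ⊕ Fin p, (if (toLit p) j ∈ B ∧ negLit ((toLit p) j) ∉ A then (1:ℝ) else 0) := by
    unfold dotp
    refine Finset.sum_congr rfl fun j _ => ?_
    rw [enc_apply, encNotFalse_apply]
    by_cases h : (toLit p) j ∈ B <;> by_cases h' : negLit ((toLit p) j) ∉ A <;>
      simp [h, h']
  have h2 : ∑ j : Fin p ⊕ Fin p, (if (toLit p) j ∈ B ∧ negLit ((toLit p) j) ∉ A then (1:ℝ) else 0)
      = ∑ l : Lit p, (if l ∈ B ∧ negLit l ∉ A then (1:ℝ) else 0) :=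
    Fintype.sum_equiv (toLit p) _ _ (fun _ => rfl)
  rw [h1, h2, Finset.sum_boole]
  congr 1
  have : Finset.univ.filter (fun l : Lit p => l ∈ B ∧ negLit l ∉ A)
      = B.filter fun l => negLit l ∉ A := by
    ext l; simp
  rw [this]

open Classical in
theorem stmt3 (p c : ℕ) (hp : 1 ≤ p) (hc : 1 ≤ c)
    (C : Fin c → Finset (Lit p)) (hC : ∀ i, Consistent (C i))
    (hC3 : ∀ i, (C i).card ≤ 3)
    (A : Finset (Lit p)) (hA : Consistent A)
    (z : Fin p ⊕ Fin p → ℝ)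
    (hz : z = fun j => ∑ i : Fin c,
      (if dotp (enc (C i)) (encNotFalse A) = 1 then (1 : ℝ) else 0) * enc (C i) j)
    (m : ℝ) (hm : 1 < m) :
    enc (deducedSet C A) = fun j =>
      max (m * z j - encAssigned A j) 0 - max (m * z j - 1) 0 := by
  funext j
  classical
  set l := (toLit p) j with hl
  -- z j as a natural number count
  set S : Finset (Fin c) :=
    Finset.univ.filter (fun i => dotp (enc (C i)) (encNotFalse A) = 1 ∧ l ∈ C i) with hS
  have hzj : z j = (S.card : ℝ) := by
    rw [hz]
    simp only
    have : ∀ i : Fin c,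
        (if dotp (enc (C i)) (encNotFalse A) = 1 then (1:ℝ) else 0) * enc (C i) j
        = if dotp (enc (C i)) (encNotFalse A) = 1 ∧ l ∈ C i then 1 else 0 := by
      intro i
      rw [enc_apply, ← hl]
      by_cases h1 : dotp (enc (C i)) (encNotFalse A) = 1 <;> by_cases h2 : l ∈ C i <;>
        simp [h1, h2]
    rw [Finset.sum_congr rfl fun i _ => this i, Finset.sum_boole]
  by_cases ha : l ∈ A ∨ negLit l ∈ A
  · -- assigned: both sides are 0
    have hd : l ∉ deducedSet C A := by
      simp only [deducedSet, Finset.mem_filter, Finset.mem_univ, true_and]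
      rintro ⟨h1, h2, -⟩
      rcases ha with h | h
      · exact h1 h
      · exact h2 h
    rw [enc_apply, ← hl, if_neg hd, encAssigned_apply, ← hl, if_pos ha]
    ring
  · push_neg at ha
    rw [encAssigned_apply, ← hl, if_neg (by tauto)]
    by_cases hN : S.card = 0
    · -- not deducible, z j = 0
      have hd : l ∉ deducedSet C A := by
        simp only [deducedSet, Finset.mem_filter, Finset.mem_univ, true_and]
        rintro ⟨-, -, i, hli, hall⟩
        have hdot : dotp (enc (C i)) (encNotFalse A) = 1 := by
          rw [dot_eq]
          have : (C i).filter (fun l' => negLit l' ∉ A) = {l} := by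
            ext l'
            simp only [Finset.mem_filter, Finset.mem_singleton]
            constructor
            · rintro ⟨h1, h2⟩
              by_contra hne
              exact h2 (hall l' h1 hne)
            · rintro rfl; exact ⟨hli, ha.2⟩
          rw [this]; simp
        have : i ∈ S := by simp [hS, hdot, hli]
        simp [Finset.card_eq_zero] at hN
        rw [hN] at this
        exact absurd this (Finset.notMem_empty i)
      rw [enc_apply, ← hl, if_neg hd, hzj, hN]
      norm_num
    · -- deducible, z j ≥ 1
      have hd : l ∈ deducedSet C A := by
        obtain ⟨i, hi⟩ := Finset.card_pos.mp (Nat.pos_of_ne_zero hN)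
        simp only [hS, Finset.mem_filter, Finset.mem_univ, true_and] at hi
        obtain ⟨hdot, hli⟩ := hi
        rw [dot_eq] at hdot
        have hcard : ((C i).filter (fun l' => negLit l' ∉ A)).card = 1 := by
          exact_mod_cast hdot
        have hlmem : l ∈ (C i).filter (fun l' => negLit l' ∉ A) :=
          Finset.mem_filter.mpr ⟨hli, ha.2⟩
        have hsingle : (C i).filter (fun l' => negLit l' ∉ A) = {l} := by
          obtain ⟨x, hx⟩ := Finset.card_eq_one.mp hcard
          rw [hx] at hlmem ⊢
          simp_all
        simp only [deducedSet, Finset.mem_filter, Finset.mem_univ, true_and]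
        refine ⟨ha.1, ha.2, i, hli, fun l' hl' hne => ?_⟩
        by_contra hnl
        have : l' ∈ (C i).filter (fun l'' => negLit l'' ∉ A) :=
          Finset.mem_filter.mpr ⟨hl', hnl⟩
        rw [hsingle] at this
        exact hne (Finset.mem_singleton.mp this)
      have hge : (1:ℝ) ≤ (S.card : ℝ) := by
        exact_mod_cast Nat.one_le_iff_ne_zero.mpr hN
      have hmz : (1:ℝ) < m * z j := by
        rw [hzj]
        calc (1:ℝ) < m := hm
        _ = m * 1 := by ring
        _ ≤ m * S.card := by
          apply mul_le_mul_of_nonneg_left hge (by linarith)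
      rw [enc_apply, ← hl, if_pos hd]
      rw [max_eq_left (by linarith), max_eq_left (by linarith)]
      ring
end

section
/- A 2-layer MLP with ReGLU activation can compute entrywise multiplication: for every integer n ≥ 1, there exist W_1, V ∈ ℝ^{2n×2n}, b_1, c ∈ ℝ^{2n}, W_2 ∈ ℝ^{n×2n}, b ∈ ℝ^n such that for all x_1, x_2 ∈ ℝ^n, writing x = [x_1; x_2] ∈ ℝ^{2n} for their concatenation, W_2[(W_1 x + b_1) ⊙ ReLU(V x + c)] + b = x_1 ⊙ x_2. -/
open Matrix

theorem stmt7 (n : ℕ) (hn : 1 ≤ n) :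
    ∃ (W1 V : Matrix (Fin n ⊕ Fin n) (Fin n ⊕ Fin n) ℝ)
      (b1 c : Fin n ⊕ Fin n → ℝ)
      (W2 : Matrix (Fin n) (Fin n ⊕ Fin n) ℝ) (b : Fin n → ℝ),
      ∀ x1 x2 : Fin n → ℝ,
        W2.mulVec ((W1.mulVec (Sum.elim x1 x2) + b1) *
            fun i => max ((V.mulVec (Sum.elim x1 x2) + c) i) 0) + b
          = x1 * x2 := by
  classical
  refine ⟨fun p q => if q = Sum.inl (Sum.elim id id p) then 1 else 0,
    fun p q => if q = Sum.inr (Sum.elim id id p) then (Sum.elim (fun _ => (1:ℝ)) (fun _ => -1) p) else 0,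
    0, 0,
    fun i q => Sum.elim (fun j => if j = i then (1:ℝ) else 0) (fun j => if j = i then -1 else 0) q,
    0, ?_⟩
  intro x1 x2
  funext i
  simp only [Matrix.mulVec, dotProduct, Pi.add_apply, Pi.zero_apply, add_zero, Pi.mul_apply,
    Fintype.sum_sum_type, Sum.elim_inl, Sum.elim_inr, id, ite_mul, zero_mul,
    Finset.sum_ite_eq', Finset.mem_univ, if_true, Sum.inl.injEq, Sum.inr.injEq,
    reduceCtorEq, if_false, Finset.sum_const_zero, zero_add]
  simp only [one_mul, neg_one_mul]
  rcases le_total (x2 i) 0 with h | h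
  · rw [max_eq_right h, max_eq_left (by linarith)]
    simp
  · rw [max_eq_left h, max_eq_right (by linarith)]
    simp
end

section
/- Softmax averaging concentrates on the argmax set: let n ≥ 1 and d ≥ 1 be integers, let a_1, …, a_n ∈ ℝ, and let S = {j : a_j = max_{k} a_k} be the set of maximizers. Suppose there is δ > 0 such that a_j − a_k ≥ δ for every j ∈ S and k ∉ S. Let v_1, …, v_n ∈ ℝ^d with ‖v_j‖_∞ ≤ M for all j, and for α > 0 define softmax weights p_j = exp(α a_j) / Σ_{k=1}^n exp(α a_k). Then ‖ Σ_{j=1}^n p_j v_j − (1/|S|) Σ_{j ∈ S} v_j ‖_∞ ≤ 2 M n e^{−α δ}. -/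
open Finset

open Classical in
theorem stmt11 (n d : ℕ) (hn : 1 ≤ n) (hd : 1 ≤ d)
    (a : Fin n → ℝ)
    (S : Finset (Fin n))
    (hS : S = Finset.univ.filter (fun j => a j =
      Finset.univ.sup' ⟨⟨0, hn⟩, Finset.mem_univ _⟩ a))
    (δ : ℝ) (hδ : 0 < δ)
    (hgap : ∀ j ∈ S, ∀ k, k ∉ S → δ ≤ a j - a k)
    (M : ℝ) (v : Fin n → Fin d → ℝ) (hv : ∀ j i, |v j i| ≤ M)
    (α : ℝ) (hα : 0 < α) :
    ∀ i : Fin d,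
      |(∑ j, (Real.exp (α * a j) / ∑ k, Real.exp (α * a k)) * v j i)
          - (∑ j ∈ S, v j i) / (S.card : ℝ)|
        ≤ 2 * M * n * Real.exp (-(α * δ)) := by
  intro i
  have hne : Nonempty (Fin n) := ⟨⟨0, hn⟩⟩
  set m : ℝ := Finset.univ.sup' ⟨⟨0, hn⟩, Finset.mem_univ _⟩ a with hm
  set Z : ℝ := ∑ k, Real.exp (α * a k) with hZ
  set D : ℝ := Real.exp (-(α * δ)) with hD
  set E : ℝ := Real.exp (α * m) with hE
  have hDpos : 0 < D := Real.exp_pos _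
  have hEpos : 0 < E := Real.exp_pos _
  have hZpos : 0 < Z :=
    Finset.sum_pos (fun k _ => Real.exp_pos _) ⟨⟨0, hn⟩, Finset.mem_univ _⟩
  obtain ⟨j0, hj0mem, hj0⟩ :=
    Finset.exists_mem_eq_sup' (⟨⟨0, hn⟩, Finset.mem_univ _⟩ : Finset.univ.Nonempty) a
  have hj0S : j0 ∈ S := by rw [hS]; simp [hj0.symm]; exact hm.symm
  have hSne : S.Nonempty := ⟨j0, hj0S⟩
  set s : ℝ := (S.card : ℝ) with hs
  have hspos : (0:ℝ) < s := by rw [hs]; exact_mod_cast Finset.card_pos.mpr hSne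
  have hs1 : (1:ℝ) ≤ s := by rw [hs]; exact_mod_cast Finset.card_pos.mpr hSne
  have haS : ∀ j ∈ S, a j = m := by
    intro j hj; rw [hS] at hj; simpa using hj
  have hak : ∀ k, k ∉ S → a k ≤ m - δ := by
    intro k hk
    have h1 := hgap j0 hj0S k hk
    have h2 := haS j0 hj0S
    linarith
  have hM : 0 ≤ M := le_trans (abs_nonneg _) (hv j0 i)
  set p : Fin n → ℝ := fun j => Real.exp (α * a j) / Z with hp
  have hpsum : ∑ j, p j = 1 := by
    rw [hp]
    rw [← Finset.sum_div]
    exact div_self (ne_of_gt hZpos)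
  have hZlow : s * E ≤ Z := by
    have h1 : ∑ j ∈ S, Real.exp (α * a j) = s * E := by
      rw [Finset.sum_congr rfl (fun j hj => by rw [haS j hj])]
      simp [Finset.sum_const, hs, mul_comm]
      exact Or.inl hE.symm
    calc s * E = ∑ j ∈ S, Real.exp (α * a j) := h1.symm
      _ ≤ Z := Finset.sum_le_sum_of_subset_of_nonneg (Finset.subset_univ S)
          (fun _ _ _ => (Real.exp_pos _).le)
  have hEZ : E ≤ Z := le_trans (by nlinarith) hZlow
  have hpnonneg : ∀ j, 0 ≤ p j := fun j => div_nonneg (Real.exp_pos _).le hZpos.le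
  have hpin : ∀ j ∈ S, p j ≤ 1 / s := by
    intro j hj
    rw [hp]
    simp only
    rw [haS j hj, div_le_div_iff₀ hZpos hspos]
    nlinarith
  have hpk : ∀ k, k ∉ S → p k ≤ D := by
    intro k hk
    rw [hp]
    simp only
    rw [div_le_iff₀ hZpos]
    have h1 : Real.exp (α * a k) ≤ E * D := by
      rw [hE, hD, ← Real.exp_add]
      apply Real.exp_le_exp.mpr
      have := hak k hk
      nlinarith
    nlinarith
  have hTsum : ∑ k ∈ Sᶜ, p k ≤ n * D := by
    calc ∑ k ∈ Sᶜ, p k ≤ ∑ k ∈ Sᶜ, D :=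
          Finset.sum_le_sum (fun k hk => hpk k (Finset.mem_compl.mp hk))
      _ = (Sᶜ.card : ℝ) * D := by rw [Finset.sum_const, nsmul_eq_mul]
      _ ≤ n * D := by
          apply mul_le_mul_of_nonneg_right _ hDpos.le
          have : Sᶜ.card ≤ n := le_trans (Finset.card_le_univ _) (by simp)
          exact_mod_cast this
  have hcsum : ∑ j ∈ S, (1 / s - p j) = ∑ k ∈ Sᶜ, p k := by
    have h1 : ∑ j ∈ S, (1 / s : ℝ) = 1 := by
      rw [Finset.sum_const, nsmul_eq_mul]
      field_simp
      exact hs.symm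
    have h2 : ∑ j ∈ S, p j + ∑ k ∈ Sᶜ, p k = 1 := by
      rw [Finset.sum_add_sum_compl]; exact hpsum
    rw [Finset.sum_sub_distrib, h1]
    linarith
  have hkey : (∑ j, p j * v j i) - (∑ j ∈ S, v j i) / s
      = ∑ j ∈ S, (p j - 1 / s) * v j i + ∑ k ∈ Sᶜ, p k * v k i := by
    have h1 : (∑ j, p j * v j i)
        = ∑ j ∈ S, p j * v j i + ∑ k ∈ Sᶜ, p k * v k i :=
      (Finset.sum_add_sum_compl S _).symm
    have h2 : (∑ j ∈ S, v j i) / s = ∑ j ∈ S, (1 / s) * v j i := by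
      rw [Finset.sum_div]
      exact Finset.sum_congr rfl (fun j _ => by ring)
    have h3 : ∑ j ∈ S, (p j - 1 / s) * v j i
        = ∑ j ∈ S, p j * v j i - ∑ j ∈ S, 1 / s * v j i := by
      rw [← Finset.sum_sub_distrib]
      exact Finset.sum_congr rfl (fun j _ => by ring)
    rw [h1, h2, h3]; ring
  have hterm1 : |∑ j ∈ S, (p j - 1 / s) * v j i| ≤ (∑ k ∈ Sᶜ, p k) * M := by
    calc |∑ j ∈ S, (p j - 1 / s) * v j i|
        ≤ ∑ j ∈ S, |(p j - 1 / s) * v j i| := Finset.abs_sum_le_sum_abs _ _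
      _ ≤ ∑ j ∈ S, (1 / s - p j) * M := by
          apply Finset.sum_le_sum
          intro j hj
          rw [abs_mul]
          have hcn : 0 ≤ 1 / s - p j := by linarith [hpin j hj]
          have : |p j - 1 / s| = 1 / s - p j := by
            rw [abs_sub_comm]; exact abs_of_nonneg hcn
          rw [this]
          exact mul_le_mul_of_nonneg_left (hv j i) hcn
      _ = (∑ j ∈ S, (1 / s - p j)) * M := by rw [Finset.sum_mul]
      _ = (∑ k ∈ Sᶜ, p k) * M := by rw [hcsum]
  have hterm2 : |∑ k ∈ Sᶜ, p k * v k i| ≤ (∑ k ∈ Sᶜ, p k) * M := by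
    calc |∑ k ∈ Sᶜ, p k * v k i|
        ≤ ∑ k ∈ Sᶜ, |p k * v k i| := Finset.abs_sum_le_sum_abs _ _
      _ ≤ ∑ k ∈ Sᶜ, p k * M := by
          apply Finset.sum_le_sum
          intro k _
          rw [abs_mul, abs_of_nonneg (hpnonneg k)]
          exact mul_le_mul_of_nonneg_left (hv k i) (hpnonneg k)
      _ = (∑ k ∈ Sᶜ, p k) * M := by rw [Finset.sum_mul]
  have hfinal : |(∑ j, p j * v j i) - (∑ j ∈ S, v j i) / s|
      ≤ 2 * M * n * D := by
    rw [hkey]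
    calc |∑ j ∈ S, (p j - 1 / s) * v j i + ∑ k ∈ Sᶜ, p k * v k i|
        ≤ |∑ j ∈ S, (p j - 1 / s) * v j i| + |∑ k ∈ Sᶜ, p k * v k i| :=
          abs_add_le _ _
      _ ≤ (∑ k ∈ Sᶜ, p k) * M + (∑ k ∈ Sᶜ, p k) * M := add_le_add hterm1 hterm2
      _ ≤ n * D * M + n * D * M := by
          have := hTsum
          gcongr <;> assumption
      _ = 2 * M * n * D := by ring
  exact hfinal
end

section
/- In the Basic DPLL transition system, every BackTrack step reachable from the initial state is a valid Backjump step: if ∅ ‖ F ⟹* M ∘ l^d ∘ N ‖ F, N contains no decision literals, and there exists a clause C of F with M ∘ l^d ∘ N ⊨ ¬C, then the transition M ∘ l^d ∘ N ‖ F ⟹ M ∘ (¬l) ‖ F is an instance of the Backjump rule; that is, there exist a clause C' and the literal l' = ¬l such that F ⊨ C' ∨ ¬l, M ⊨ ¬C', neither l nor ¬l occurs in M, and l occurs (positively or negatively) in a clause of F. -/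
/-- Literals over a set of propositional variables `V`; negation flips the Boolean. -/
abbrev DLit (V : Type) := V × Bool

def dneg {V : Type} (l : DLit V) : DLit V := (l.1, !l.2)

/-- A clause: a finite set of literals, read as a disjunction. -/
abbrev DClause (V : Type) := Finset (DLit V)

/-- A CNF formula: a finite set of clauses, read as a conjunction. -/
abbrev CNF (V : Type) := Finset (DClause V)

/-- An annotated trail: a sequence of literals, each marked (`true`) if it is a
decision literal. -/
abbrev Trail (V : Type) := List (DLit V × Bool)

/-- The literal `l` occurs in the trail `M`. -/
def inTrail {V : Type} (M : Trail V) (l : DLit V) : Prop := l ∈ M.map Prod.fst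

/-- `M ⊨ ¬C`: the negation of every literal of `C` occurs in `M`. -/
def falsifies {V : Type} (M : Trail V) (C : DClause V) : Prop :=
  ∀ l ∈ C, inTrail M (dneg l)

/-- A total assignment satisfies a clause. -/
def satClause {V : Type} (v : V → Bool) (C : DClause V) : Prop := ∃ l ∈ C, v l.1 = l.2

/-- A total assignment satisfies a CNF formula. -/
def satCNF {V : Type} (v : V → Bool) (F : CNF V) : Prop := ∀ C ∈ F, satClause v C

/-- `F ⊨ C ∨ l'`: every total assignment satisfying `F` makes some literal of
`C ∪ {l'}` true. -/
def entails {V : Type} [DecidableEq V] (F : CNF V) (C : DClause V) (l' : DLit V) : Prop :=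
  ∀ v : V → Bool, satCNF v F → satClause v (insert l' C)

/-- States of the Basic DPLL transition system. -/
inductive DPLLState (V : Type) where
  | st : Trail V → CNF V → DPLLState V
  | sat : DPLLState V
  | unsat : DPLLState V

/-- The transition rules of the Basic DPLL system. -/
inductive Step {V : Type} [DecidableEq V] : DPLLState V → DPLLState V → Prop where
  | unitProp (M : Trail V) (F : CNF V) (C : DClause V) (l : DLit V) :
      insert l C ∈ F → falsifies M C → ¬ inTrail M l → ¬ inTrail M (dneg l) →
      Step (.st M F) (.st (M ++ [(l, false)]) F)
  | decide (M : Trail V) (F : CNF V) (l : DLit V) :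
      (∃ C ∈ F, l ∈ C ∨ dneg l ∈ C) → ¬ inTrail M l → ¬ inTrail M (dneg l) →
      Step (.st M F) (.st (M ++ [(l, true)]) F)
  | backjump (M N : Trail V) (F : CNF V) (l l' : DLit V) (C : DClause V) :
      entails F C l' → falsifies M C → ¬ inTrail M l' → ¬ inTrail M (dneg l') →
      (∃ C' ∈ F, l' ∈ C' ∨ dneg l' ∈ C') →
      Step (.st (M ++ (l, true) :: N) F) (.st (M ++ [(l', false)]) F)
  | fail (M : Trail V) (F : CNF V) (C : DClause V) :
      C ∈ F → falsifies M C → (∀ x ∈ M, x.2 = false) →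
      Step (.st M F) .unsat
  | success (M : Trail V) (F : CNF V) :
      (∀ C ∈ F, ∃ l ∈ C, inTrail M l) → Step (.st M F) .sat

section Aux

variable {V : Type} [DecidableEq V]

lemma dneg_dneg (l : DLit V) : dneg (dneg l) = l := by
  simp [dneg]

lemma lit_eq_or (a b : DLit V) (h : a.1 = b.1) : a = b ∨ a = dneg b := by
  rcases a with ⟨x, ba⟩; rcases b with ⟨y, bb⟩
  simp only [dneg] at *
  subst h
  cases ba <;> cases bb <;> simp

lemma fresh_var {T : Trail V} {l : DLit V} (h1 : ¬ inTrail T l) (h2 : ¬ inTrail T (dneg l)) :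
    l.1 ∉ T.map (fun x => x.1.1) := by
  intro h
  obtain ⟨y, hy, hy1⟩ := List.mem_map.1 h
  rcases lit_eq_or y.1 l hy1 with h' | h'
  · exact h1 (List.mem_map.2 ⟨y, hy, h'⟩)
  · exact h2 (List.mem_map.2 ⟨y, hy, h'⟩)

lemma bool_eq_of_ne_not : ∀ {a b : Bool}, ¬ a = !b → a = b := by decide

lemma sat_of_fals (v : V → Bool) (M : Trail V) (C : DClause V) (l' : DLit V)
    (hM : ∀ x ∈ M, v x.1.1 = x.1.2) (hf : falsifies M C)
    (hs : satClause v (insert l' C)) : v l'.1 = l'.2 := by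
  obtain ⟨c, hc, hvc⟩ := hs
  rcases Finset.mem_insert.1 hc with rfl | hc
  · exact hvc
  · exfalso
    obtain ⟨y, hy, hy1⟩ := List.mem_map.1 (hf c hc)
    have := hM y hy
    rw [hy1] at this
    simp only [dneg] at this
    rw [hvc] at this
    exact (Bool.not_ne_self c.2).symm this

lemma prefix_concat_cases {α : Type*} {P T : List α} {x : α} (h : P <+: T ++ [x]) :
    P <+: T ∨ P = T ++ [x] := by
  obtain ⟨S, hS⟩ := h
  rcases List.eq_nil_or_concat S with rfl | ⟨S', x', rfl⟩
  · right; simpa using hS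
  · left
    rw [List.concat_eq_append, ← List.append_assoc] at hS
    obtain ⟨h1, -⟩ := List.append_inj hS (by
      have := congrArg List.length hS
      simp only [List.length_append, List.length_cons, List.length_singleton] at this ⊢
      omega)
    exact ⟨S', h1⟩

/-- The invariant maintained along DPLL runs. -/
def TrailInv (F : CNF V) (T : Trail V) : Prop :=
  (T.map (fun x => x.1.1)).Nodup ∧
  (∀ x ∈ T, ∃ C ∈ F, x.1 ∈ C ∨ dneg x.1 ∈ C) ∧
  (∀ v : V → Bool, satCNF v F → ∀ P, P <+: T →
    (∀ x ∈ P, x.2 = true → v x.1.1 = x.1.2) → ∀ x ∈ P, v x.1.1 = x.1.2)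

def StateInv (s : DPLLState V) : Prop :=
  ∀ T F, s = .st T F → TrailInv F T

lemma inv_extend {F : CNF V} {T : Trail V} (hI : TrailInv F T) (l : DLit V) (b : Bool)
    (h1 : ¬ inTrail T l) (h2 : ¬ inTrail T (dneg l))
    (hocc : ∃ C ∈ F, l ∈ C ∨ dneg l ∈ C)
    (hval : ∀ v : V → Bool, satCNF v F → (∀ x ∈ T, v x.1.1 = x.1.2) →
      (b = true → v l.1 = l.2) → v l.1 = l.2) :
    TrailInv F (T ++ [(l, b)]) := by
  obtain ⟨hnd, ho, hg⟩ := hI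
  refine ⟨?_, ?_, ?_⟩
  · rw [List.map_append, List.nodup_append]
    exact ⟨hnd, List.nodup_singleton _, by
      intro a ha b hb hab
      simp only [List.map_cons, List.map_nil, List.mem_singleton] at hb
      subst hb
      subst hab
      exact fresh_var h1 h2 ha⟩
  · intro x hx
    rcases List.mem_append.1 hx with hx | hx
    · exact ho x hx
    · simp only [List.mem_singleton] at hx
      subst hx
      exact hocc
  · intro v hv P hP hdec
    rcases prefix_concat_cases hP with hP | rfl
    · exact hg v hv P hP hdec
    · have hT : ∀ x ∈ T, v x.1.1 = x.1.2 := by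
        refine hg v hv T (List.prefix_refl T) ?_
        intro x hx hx2
        exact hdec x (List.mem_append_left _ hx) hx2
      intro x hx
      rcases List.mem_append.1 hx with hx | hx
      · exact hT x hx
      · simp only [List.mem_singleton] at hx
        subst hx
        exact hval v hv hT (fun hb => hdec (l, b) (List.mem_append_right _ (List.mem_singleton.2 rfl)) hb)

lemma step_inv {s t : DPLLState V} (h : Step s t) (hs : StateInv s) : StateInv t := by
  cases h with
  | unitProp M F C l h1 h2 h3 h4 =>
    intro T F' heq
    injection heq with hT hF
    subst hT; subst hF
    refine inv_extend (hs M F rfl) l false h3 h4 ⟨insert l C, h1, Or.inl (Finset.mem_insert_self _ _)⟩ ?_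
    intro v hv hM _
    exact sat_of_fals v M C l hM h2 (hv _ h1)
  | decide M F l h1 h2 h3 =>
    intro T F' heq
    injection heq with hT hF
    subst hT; subst hF
    refine inv_extend (hs M F rfl) l true h2 h3 h1 ?_
    intro v hv hM hb
    exact hb rfl
  | backjump M N F l l' C hent hfals h3 h4 h5 =>
    intro T F' heq
    injection heq with hT hF
    subst hT; subst hF
    obtain ⟨hnd, ho, hg⟩ := hs _ F rfl
    have hMpre : M <+: M ++ (l, true) :: N := ⟨(l, true) :: N, rfl⟩
    have hInvM : TrailInv F M := by
      refine ⟨?_, ?_, ?_⟩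
      · exact hnd.sublist ((List.sublist_append_left M _).map _)
      · intro x hx
        exact ho x (List.mem_append_left _ hx)
      · intro v hv P hP hdec
        exact hg v hv P (hP.trans hMpre) hdec
    refine inv_extend hInvM l' false h3 h4 h5 ?_
    intro v hv hM _
    exact sat_of_fals v M C l' hM hfals (hent v hv)
  | fail M F C h1 h2 h3 =>
    intro T F' heq
    exact absurd heq (by simp)
  | success M F h1 =>
    intro T F' heq
    exact absurd heq (by simp)

lemma reach_inv {F : CNF V} {s : DPLLState V}
    (h : Relation.ReflTransGen Step (DPLLState.st [] F) s) : StateInv s := by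
  induction h with
  | refl =>
    intro T F' heq
    injection heq with hT hF
    subst hT
    exact ⟨by simp, by simp, by
      intro v hv P hP hdec
      have : P = [] := List.prefix_nil.mp hP
      subst this
      simp⟩
  | tail _ hstep ih => exact step_inv hstep ih

end Aux

/-- Every BackTrack step reachable from the initial state is a valid Backjump step. -/
theorem stmt12 {V : Type} [DecidableEq V] [Fintype V]
    (F : CNF V) (M N : Trail V) (l : DLit V)
    (hreach : Relation.ReflTransGen Step (DPLLState.st [] F)
      (DPLLState.st (M ++ (l, true) :: N) F))
    (hN : ∀ x ∈ N, x.2 = false)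
    (hconf : ∃ C ∈ F, falsifies (M ++ (l, true) :: N) C) :
    (∃ C' : DClause V,
      entails F C' (dneg l) ∧ falsifies M C' ∧
      ¬ inTrail M l ∧ ¬ inTrail M (dneg l) ∧
      (∃ Cf ∈ F, l ∈ Cf ∨ dneg l ∈ Cf)) ∧
    Step (DPLLState.st (M ++ (l, true) :: N) F)
      (DPLLState.st (M ++ [(dneg l, false)]) F) := by
  obtain ⟨hnd, ho, hg⟩ := reach_inv hreach _ F rfl
  obtain ⟨C, hCF, hCfals⟩ := hconf
  -- l's variable does not occur in M
  have hvar : l.1 ∉ M.map (fun x => x.1.1) := by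
    rw [List.map_append, List.nodup_append] at hnd
    intro h
    exact hnd.2.2 _ h _ (by simp) rfl
  have hMl : ¬ inTrail M l := by
    intro h
    obtain ⟨y, hy, hy1⟩ := List.mem_map.1 h
    exact hvar (List.mem_map.2 ⟨y, hy, by rw [hy1]⟩)
  have hMnl : ¬ inTrail M (dneg l) := by
    intro h
    obtain ⟨y, hy, hy1⟩ := List.mem_map.1 h
    exact hvar (List.mem_map.2 ⟨y, hy, by rw [hy1]; rfl⟩)
  have hocc : ∃ Cf ∈ F, l ∈ Cf ∨ dneg l ∈ Cf :=
    ho (l, true) (List.mem_append_right _ (by simp))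
  -- the backjump clause: negations of literals of M
  set C' : DClause V := (M.map (fun x => dneg x.1)).toFinset with hC'
  have hfalsC' : falsifies M C' := by
    intro c hc
    rw [hC', List.mem_toFinset] at hc
    obtain ⟨y, hy, hy1⟩ := List.mem_map.1 hc
    refine List.mem_map.2 ⟨y, hy, ?_⟩
    rw [← hy1, dneg_dneg]
  have hentC' : entails F C' (dneg l) := by
    intro v hv
    by_contra hno
    rw [satClause] at hno
    push_neg at hno
    have hvl : v l.1 = l.2 := by
      have h := hno (dneg l) (Finset.mem_insert_self _ _)
      simp only [dneg] at h
      exact bool_eq_of_ne_not h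
    have hvM : ∀ x ∈ M, v x.1.1 = x.1.2 := by
      intro x hx
      have hmem : dneg x.1 ∈ insert (dneg l) C' := by
        refine Finset.mem_insert_of_mem ?_
        rw [hC', List.mem_toFinset]
        exact List.mem_map.2 ⟨x, hx, rfl⟩
      have h := hno _ hmem
      simp only [dneg] at h
      exact bool_eq_of_ne_not h
    -- v satisfies the whole trail
    have hall : ∀ x ∈ M ++ (l, true) :: N, v x.1.1 = x.1.2 := by
      refine hg v hv _ (List.prefix_refl _) ?_
      intro x hx hx2
      rcases List.mem_append.1 hx with hx | hx
      · exact hvM x hx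
      · rcases List.mem_cons.1 hx with rfl | hx
        · exact hvl
        · exact absurd (hN x hx) (by simp [hx2])
    -- but the conflict clause is falsified
    obtain ⟨c, hc, hvc⟩ := hv C hCF
    obtain ⟨y, hy, hy1⟩ := List.mem_map.1 (hCfals c hc)
    have := hall y hy
    rw [hy1] at this
    simp only [dneg] at this
    rw [hvc] at this
    exact (Bool.not_ne_self c.2).symm this
  exact ⟨⟨C', hentC', hfalsC', hMl, hMnl, hocc⟩,
    Step.backjump M N F l (dneg l) C' hentC' hfalsC' hMnl (by rwa [dneg_dneg]) (by
      obtain ⟨Cf, hCf, hor⟩ := hocc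
      exact ⟨Cf, hCf, by rwa [dneg_dneg, Or.comm]⟩)⟩
end
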